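/- Let n ∈ ℕ and p ∈ [0,1]. Let Z be the random variable on Bool × (Fin n → Bool) obtained as follows: X is Bernoulli with Pr(X = true) = p, Y is uniformly distributed on (Fin n → Bool) independently of X, and Z := (X xor Par(Y), Y), where Par(y) := xor of all coordinates of y. Index the n + 1 coordinates of Z by Fin (n+1), with coordinate 0 the bit X xor Par(Y) and coordinates 1,…,n the bits of Y. Then for every proper subset T ⊊ Fin (n+1) and every assignment σ : T → Bool: Pr(∀ i ∈ T, Z_i = σ(i)) = 2^{−|T|}. -/
import Mathlib


/-- The parity (xor of all coordinates) of a bit string `y : Fin n → Bool`. -/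
def par {n : ℕ} (y : Fin n → Bool) : Bool :=
  decide (Odd (Finset.univ.filter (fun i => y i = true)).card)

lemma par_flip {n : ℕ} (y : Fin n → Bool) (j : Fin n) :
    par (Function.update y j (!y j)) = !(par y) := by
  unfold par
  cases hyj : y j with
  | false =>
    have h : Finset.univ.filter (fun i => Function.update y j (!y j) i = true)
        = insert j (Finset.univ.filter (fun i => y i = true)) := by
      ext i
      by_cases hij : i = j <;> simp [Function.update_apply, hij, hyj]
    rw [hyj] at h
    rw [h, Finset.card_insert_of_notMem (by simp [hyj])]
    simp [Nat.odd_add_one, ← Nat.not_odd_iff_even]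
  | true =>
    have hj : j ∈ Finset.univ.filter (fun i => y i = true) := by simp [hyj]
    have h : Finset.univ.filter (fun i => Function.update y j (!y j) i = true)
        = (Finset.univ.filter (fun i => y i = true)).erase j := by
      ext i
      by_cases hij : i = j <;> simp [Function.update_apply, hij, hyj]
    rw [hyj] at h
    rw [h, ← Finset.card_erase_add_one hj]
    simp [Nat.odd_add_one, ← Nat.not_odd_iff_even]

lemma count_fixed {n : ℕ} (S : Finset (Fin n)) (τ : Fin n → Bool) :
    (Finset.univ.filter (fun y : Fin n → Bool => ∀ i ∈ S, y i = τ i)).card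
      = 2 ^ (n - S.card) := by
  classical
  rw [← Fintype.card_subtype]
  have e : {y : Fin n → Bool // ∀ i ∈ S, y i = τ i} ≃ ({i : Fin n // i ∉ S} → Bool) :=
    { toFun := fun y j => y.1 j.1
      invFun := fun g => ⟨fun i => if h : i ∈ S then τ i else g ⟨i, h⟩,
        fun i hi => by simp [hi]⟩
      left_inv := fun y => by
        ext i
        by_cases h : i ∈ S
        · simp [h, y.2 i h]
        · simp [h]
      right_inv := fun g => by
        ext j
        simp [j.2] }
  rw [Fintype.card_congr e, Fintype.card_fun]
  have hc : (Finset.univ.filter (fun x : Fin n => x ∉ S)) = Sᶜ := by ext i; simp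
  simp [Fintype.card_subtype, hc, Finset.card_compl]

open Finset
lemma count_fixed_par {n : ℕ} (S : Finset (Fin n)) (τ : Fin n → Bool) (hS : S ≠ Finset.univ)
    (b : Bool) :
    (Finset.univ.filter (fun y : Fin n → Bool => (∀ i ∈ S, y i = τ i) ∧ par y = b)).card
      = 2 ^ (n - S.card - 1) := by
  classical
  obtain ⟨j, hj⟩ : ∃ j, j ∉ S := by
    by_contra h
    push_neg at h
    exact hS (Finset.eq_univ_iff_forall.mpr h)
  have hinv : ∀ y : Fin n → Bool,
      Function.update (Function.update y j (!y j)) j (!(Function.update y j (!y j)) j) = y := by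
    intro y
    simp [Function.update_idem]
  have hmem : ∀ (c : Bool) (y : Fin n → Bool), ((∀ i ∈ S, y i = τ i) ∧ par y = c) →
      ((∀ i ∈ S, Function.update y j (!y j) i = τ i) ∧ par (Function.update y j (!y j)) = !c) := by
    intro c y ⟨h1, h2⟩
    refine ⟨fun i hi => ?_, by rw [par_flip, h2]⟩
    rw [Function.update_of_ne (by rintro rfl; exact hj hi)]
    exact h1 i hi
  have key : ∀ c : Bool,
      (Finset.univ.filter (fun y : Fin n → Bool => (∀ i ∈ S, y i = τ i) ∧ par y = c)).card
      = (Finset.univ.filter (fun y : Fin n → Bool => (∀ i ∈ S, y i = τ i) ∧ par y = !c)).card := by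
    intro c
    refine Finset.card_bij' (fun y _ => Function.update y j (!y j))
      (fun y _ => Function.update y j (!y j)) ?_ ?_ ?_ ?_
    case refine_1 =>
      intro a ha
      simp only [Finset.mem_filter, Finset.mem_univ, true_and] at ha ⊢
      exact hmem c a ha
    case refine_2 =>
      intro a ha
      simp only [Finset.mem_filter, Finset.mem_univ, true_and] at ha ⊢
      simpa using hmem (!c) a ha
    case refine_3 =>
      intro a _
      exact hinv a
    case refine_4 =>
      intro a _
      exact hinv a
  have hsplit := Finset.card_filter_add_card_filter_not
    (s := Finset.univ.filter (fun y : Fin n → Bool => ∀ i ∈ S, y i = τ i))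
    (p := fun y => par y = true)
  rw [Finset.filter_filter, Finset.filter_filter] at hsplit
  simp only [Bool.not_eq_true] at hsplit
  have hca : (Finset.univ.filter (fun y : Fin n → Bool => ∀ i ∈ S, y i = τ i)).card
      = 2 ^ (n - S.card) := count_fixed S τ
  rw [hca] at hsplit
  have hlt : S.card < n := by
    have h1 : S.card ≤ n := by simpa using Finset.card_le_univ S
    rcases h1.lt_or_eq with h | h
    · exact h
    · exact absurd (S.eq_univ_of_card (by simp [h])) hS
  have hpow : 2 ^ (n - S.card) = 2 ^ (n - S.card - 1) + 2 ^ (n - S.card - 1) := by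
    have h2 : n - S.card = (n - S.card - 1) + 1 := by clear hmem hinv key hsplit hca; omega
    calc 2 ^ (n - S.card) = 2 ^ ((n - S.card - 1) + 1) := by rw [← h2]
      _ = 2 ^ (n - S.card - 1) + 2 ^ (n - S.card - 1) := by rw [pow_succ]; ring
  have hk := key true
  simp only [Bool.not_true] at hk
  rw [hpow] at hsplit
  cases b with
  | false =>
    revert hk hsplit
    generalize (Finset.univ.filter (fun y : Fin n → Bool => (∀ i ∈ S, y i = τ i) ∧ par y = true)).card = A
    generalize (Finset.univ.filter (fun y : Fin n → Bool => (∀ i ∈ S, y i = τ i) ∧ par y = false)).card = B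
    intro h1 h2
    clear hmem hinv key hca hS hj
    omega
  | true =>
    revert hk hsplit
    generalize (Finset.univ.filter (fun y : Fin n → Bool => (∀ i ∈ S, y i = τ i) ∧ par y = true)).card = A
    generalize (Finset.univ.filter (fun y : Fin n → Bool => (∀ i ∈ S, y i = τ i) ∧ par y = false)).card = B
    intro h1 h2
    clear hmem hinv key hca hS hj
    omega

section Main
open Finset

/-- strict marginals of `Z = (X ⊕ Par(Y), Y)` are uniform, Lemma 3.
With `X` Bernoulli(`p`) and `Y` uniform on `(Fin n → Bool)` independent of `X`, index the
`n+1` coordinates of `Z` by `Fin (n+1)`, coordinate `0` being `X xor par Y` and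
coordinates `1,…,n` the bits of `Y`. Then for every proper subset `T ⊊ Fin (n+1)` and
assignment `σ : T → Bool`, `Pr(∀ i ∈ T, Z_i = σ i) = 2^{-|T|}`. -/
theorem stmt_11 (n : ℕ) (p : ℝ) (hp0 : 0 ≤ p) (hp1 : p ≤ 1)
    (T : Finset (Fin (n + 1))) (hT : T ≠ Finset.univ) (σ : T → Bool) :
    ∑ x : Bool, ∑ y : Fin n → Bool,
        (if x then p else 1 - p) * ((2 : ℝ) ^ n)⁻¹ *
          (if ∀ i : T, (Fin.cases (motive := fun _ => Bool)
              (xor x (par y)) y (i : Fin (n + 1))) = σ i then 1 else 0)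
      = ((2 : ℝ) ^ T.card)⁻¹ := by
  classical
  have hTn : T.card ≤ n := by
    have h := Finset.card_lt_card (Finset.ssubset_univ_iff.mpr hT)
    simp only [Finset.card_univ, Fintype.card_fin] at h
    omega
  set S : Finset (Fin n) := Finset.univ.filter (fun j : Fin n => j.succ ∈ T) with hSdef
  set τ : Fin n → Bool := fun j => if h : j.succ ∈ T then σ ⟨j.succ, h⟩ else false with hτdef
  have himg : S.image Fin.succ = T.erase 0 := by
    ext k
    simp only [Finset.mem_image, Finset.mem_erase, hSdef, Finset.mem_filter, Finset.mem_univ,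
      true_and]
    constructor
    · rintro ⟨j, hj, rfl⟩
      exact ⟨Fin.succ_ne_zero j, hj⟩
    · rintro ⟨hk0, hk⟩
      induction k using Fin.cases with
      | zero => exact absurd rfl hk0
      | succ j => exact ⟨j, hk, rfl⟩
  have hScard : S.card = (T.erase 0).card := by
    rw [← himg, Finset.card_image_of_injective _ (Fin.succ_injective n)]
  -- the condition rewritten
  have hcond : ∀ (x : Bool) (y : Fin n → Bool),
      (∀ i : T, (Fin.cases (motive := fun _ => Bool) (xor x (par y)) y (i : Fin (n + 1))) = σ i)
      ↔ ((∀ j ∈ S, y j = τ j) ∧ ∀ h : (0 : Fin (n + 1)) ∈ T, xor x (par y) = σ ⟨0, h⟩) := by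
    intro x y
    constructor
    · intro h
      refine ⟨fun j hj => ?_, fun h0 => ?_⟩
      · have hj' : j.succ ∈ T := by simpa [hSdef] using hj
        have := h ⟨j.succ, hj'⟩
        simp only [Fin.cases_succ] at this
        rw [this, hτdef]
        simp [hj']
      · have := h ⟨0, h0⟩
        simpa using this
    · rintro ⟨h1, h2⟩ ⟨i, hi⟩
      induction i using Fin.cases with
      | zero => simpa using h2 hi
      | succ j =>
        have hj : j ∈ S := by simp [hSdef, hi]
        have := h1 j hj
        simp only [Fin.cases_succ]
        rw [this, hτdef]
        simp [hi]
  -- counting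
  have hcount : ∀ x : Bool,
      (Finset.univ.filter (fun y : Fin n → Bool =>
        ∀ i : T, (Fin.cases (motive := fun _ => Bool) (xor x (par y)) y (i : Fin (n + 1))) = σ i)).card
      = 2 ^ (n - T.card) := by
    intro x
    rw [Finset.filter_congr (fun y _ => by
      simpa using (hcond x y))]
    by_cases h0 : (0 : Fin (n + 1)) ∈ T
    · have hiff : ∀ y : Fin n → Bool,
          ((∀ j ∈ S, y j = τ j) ∧ ∀ h : (0 : Fin (n + 1)) ∈ T, xor x (par y) = σ ⟨0, h⟩)
          ↔ ((∀ j ∈ S, y j = τ j) ∧ par y = xor x (σ ⟨0, h0⟩)) := by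
        intro y
        constructor
        · rintro ⟨h1, h2⟩
          refine ⟨h1, ?_⟩
          have := h2 h0
          revert this
          cases x <;> cases par y <;> cases σ ⟨0, h0⟩ <;> simp
        · rintro ⟨h1, h2⟩
          refine ⟨h1, fun h => ?_⟩
          revert h2
          cases x <;> cases par y <;> cases σ ⟨0, h0⟩ <;> simp
      rw [Finset.filter_congr (fun y _ => hiff y)]
      have hSne : S ≠ Finset.univ := by
        intro hcontra
        have h1 : S.card = n := by rw [hcontra]; simp
        have h2 : (T.erase 0).card = T.card - 1 := Finset.card_erase_of_mem h0
        have h3 : 1 ≤ T.card := Finset.card_pos.mpr ⟨0, h0⟩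
        omega
      rw [count_fixed_par S τ hSne]
      congr 1
      have h2 : (T.erase 0).card = T.card - 1 := Finset.card_erase_of_mem h0
      have h3 : 1 ≤ T.card := Finset.card_pos.mpr ⟨0, h0⟩
      omega
    · have hiff : ∀ y : Fin n → Bool,
          ((∀ j ∈ S, y j = τ j) ∧ ∀ h : (0 : Fin (n + 1)) ∈ T, xor x (par y) = σ ⟨0, h⟩)
          ↔ (∀ j ∈ S, y j = τ j) := by
        intro y
        constructor
        · rintro ⟨h1, _⟩; exact h1
        · intro h1; exact ⟨h1, fun h => absurd h h0⟩
      rw [Finset.filter_congr (fun y _ => hiff y)]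
      rw [count_fixed S τ]
      congr 1
      have h2 : T.erase 0 = T := Finset.erase_eq_of_notMem h0
      rw [hScard, h2]
  -- sum over y
  have hsum : ∀ x : Bool,
      (∑ y : Fin n → Bool, (if ∀ i : T, (Fin.cases (motive := fun _ => Bool)
          (xor x (par y)) y (i : Fin (n + 1))) = σ i then (1 : ℝ) else 0))
      = 2 ^ (n - T.card) := by
    intro x
    rw [Finset.sum_boole, hcount x]
    norm_num
  -- assemble
  have hstep : ∀ x : Bool,
      (∑ y : Fin n → Bool,
        (if x then p else 1 - p) * ((2 : ℝ) ^ n)⁻¹ *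
          (if ∀ i : T, (Fin.cases (motive := fun _ => Bool)
              (xor x (par y)) y (i : Fin (n + 1))) = σ i then 1 else 0))
      = (if x then p else 1 - p) * (((2 : ℝ) ^ n)⁻¹ * 2 ^ (n - T.card)) := by
    intro x
    rw [← Finset.mul_sum, hsum x, mul_assoc]
  rw [Fintype.sum_bool, hstep true, hstep false]
  have harith : ((2 : ℝ) ^ n)⁻¹ * 2 ^ (n - T.card) = ((2 : ℝ) ^ T.card)⁻¹ := by
    have hpow : (2 : ℝ) ^ n = 2 ^ (n - T.card) * 2 ^ T.card := by
      rw [← pow_add]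
      congr 1
      omega
    rw [hpow, mul_inv]
    have h1 : ((2 : ℝ) ^ (n - T.card)) ≠ 0 := by positivity
    field_simp
  rw [harith]
  norm_num
  ring

end Main
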